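/- In the group G = ⟨a,b,c,d | a²,b²,c²,d², (ab)³,(bc)³,(ad)³,(db)³,(daba)², (ac)², (cd)²⟩, the assignments κ(a) = b, κ(b) = c, κ(d) = bdb satisfy the defining relations of Σ₄ on adjacent transpositions: κ(a)² = κ(b)² = κ(d)² = 1, (κ(a)κ(d))³ = 1, (κ(a)κ(b))³ = 1, (κ(d)κ(b))³ = 1, and (κ(d)κ(a)κ(b)κ(a))² = 1. -/
import Mathlib

/-- Relations of the group `G = ⟨a,b,c,d | a²,b²,c²,d², (ab)³,(bc)³,(ad)³,(db)³,
(daba)², (ac)², (cd)²⟩`, generators indexed by `Fin 4` as `a = 0`, `b = 1`,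
`c = 2`, `d = 3`. -/
def treeRels : Set (FreeGroup (Fin 4)) :=
  let a := FreeGroup.of (0 : Fin 4)
  let b := FreeGroup.of (1 : Fin 4)
  let c := FreeGroup.of (2 : Fin 4)
  let d := FreeGroup.of (3 : Fin 4)
  {a ^ 2, b ^ 2, c ^ 2, d ^ 2, (a * b) ^ 3, (b * c) ^ 3, (a * d) ^ 3, (d * b) ^ 3,
    (d * a * b * a) ^ 2, (a * c) ^ 2, (c * d) ^ 2}

private lemma conj_pow' {G : Type*} [Group G] (g h : G) (n : ℕ) :
    (g * h * g⁻¹) ^ n = g * h ^ n * g⁻¹ := by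
  induction n with
  | zero => simp
  | succ n ih => rw [pow_succ, pow_succ, ih]; group

/-- In `G`, the elements `κ(a) = b`, `κ(b) = c`, `κ(d) = bdb` satisfy the defining
relations of `Σ₄` on adjacent transpositions. -/
theorem kappa_preserves_relations :
    let a : PresentedGroup treeRels := PresentedGroup.of (0 : Fin 4)
    let b : PresentedGroup treeRels := PresentedGroup.of (1 : Fin 4)
    let c : PresentedGroup treeRels := PresentedGroup.of (2 : Fin 4)
    let d : PresentedGroup treeRels := PresentedGroup.of (3 : Fin 4)
    let κa := b
    let κb := c
    let κd := b * d * b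
    κa ^ 2 = 1 ∧ κb ^ 2 = 1 ∧ κd ^ 2 = 1 ∧ (κa * κd) ^ 3 = 1 ∧ (κa * κb) ^ 3 = 1 ∧
      (κd * κb) ^ 3 = 1 ∧ (κd * κa * κb * κa) ^ 2 = 1 := by
  intro a b c d κa κb κd
  let π : FreeGroup (Fin 4) →* PresentedGroup treeRels :=
    QuotientGroup.mk' (Subgroup.normalClosure treeRels)
  have rel : ∀ r ∈ treeRels, π r = 1 := by
    intro r hr
    exact (QuotientGroup.eq_one_iff r).mpr (Subgroup.subset_normalClosure hr)
  have hb : b ^ 2 = 1 := by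
    have := rel ((FreeGroup.of (1 : Fin 4)) ^ 2) (by right; left; rfl)
    rw [map_pow] at this; exact this
  have hc : c ^ 2 = 1 := by
    have := rel ((FreeGroup.of (2 : Fin 4)) ^ 2) (by right; right; left; rfl)
    rw [map_pow] at this; exact this
  have hd : d ^ 2 = 1 := by
    have := rel ((FreeGroup.of (3 : Fin 4)) ^ 2) (by right; right; right; left; rfl)
    rw [map_pow] at this; exact this
  have hbc : (b * c) ^ 3 = 1 := by
    have := rel ((FreeGroup.of (1 : Fin 4) * FreeGroup.of (2 : Fin 4)) ^ 3)
      (by right; right; right; right; right; left; rfl)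
    rw [map_pow, map_mul] at this; exact this
  have hdb : (d * b) ^ 3 = 1 := by
    have := rel ((FreeGroup.of (3 : Fin 4) * FreeGroup.of (1 : Fin 4)) ^ 3)
      (by right; right; right; right; right; right; right; left; rfl)
    rw [map_pow, map_mul] at this; exact this
  have hcd : (c * d) ^ 2 = 1 := by
    have := rel ((FreeGroup.of (2 : Fin 4) * FreeGroup.of (3 : Fin 4)) ^ 2)
      (by right; right; right; right; right; right; right; right; right; right; rfl)
    rw [map_pow, map_mul] at this; exact this
  -- inverses of involutions
  have binv : b⁻¹ = b := by rw [← mul_eq_one_iff_inv_eq, ← sq, hb]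
  have cinv : c⁻¹ = c := by rw [← mul_eq_one_iff_inv_eq, ← sq, hc]
  have dinv : d⁻¹ = d := by rw [← mul_eq_one_iff_inv_eq, ← sq, hd]
  have hbb : b * b = 1 := by rw [← sq, hb]
  -- braid identity `bcb = cbc`
  have hbcb : b * c * b = c * b * c := by
    have h1 : b * (c * (b * (c * (b * c)))) = 1 := by
      have := hbc
      rw [pow_succ, pow_succ, pow_one] at this
      simpa only [mul_assoc] using this
    have h2 : (b * c * b) * (c * b * c) = 1 := by simpa only [mul_assoc] using h1
    calc b * c * b = (b * c * b)⁻¹ := by rw [mul_inv_rev, mul_inv_rev, binv, cinv, ← mul_assoc]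
    _ = c * b * c := inv_eq_of_mul_eq_one_right h2
  -- `c` and `d` commute
  have hcomm : c * d = d * c := by
    have h1 : (c * d) * (c * d) = 1 := by have := hcd; rwa [pow_succ, pow_one] at this
    calc c * d = (c * d)⁻¹ := (inv_eq_of_mul_eq_one_right h1).symm
    _ = d * c := by rw [mul_inv_rev, cinv, dinv]
  have hdc : (d * c) ^ 2 = 1 := by
    have h : d * c = (c * d)⁻¹ := by rw [mul_inv_rev, cinv, dinv]
    rw [h, inv_pow, hcd, inv_one]
  refine ⟨hb, hc, ?_, ?_, hbc, ?_, ?_⟩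
  · show (b * d * b) ^ 2 = 1
    rw [show b * d * b = b * d * b⁻¹ by rw [binv], conj_pow', hd, mul_one, mul_inv_cancel]
  · show (b * (b * d * b)) ^ 3 = 1
    rw [show b * (b * d * b) = (b * b) * (d * b) by simp only [mul_assoc], hbb, one_mul, hdb]
  · show ((b * d * b) * c) ^ 3 = 1
    have key : b * (c * (d * b) * c⁻¹) * b⁻¹ = (b * d * b) * c := by
      rw [binv, cinv]
      calc b * (c * (d * b) * c) * b
          = b * ((c * d) * (b * (c * b))) := by simp only [mul_assoc]
        _ = b * ((d * c) * (b * (c * b))) := by rw [hcomm]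
        _ = b * (d * ((c * b * c) * b)) := by simp only [mul_assoc]
        _ = b * (d * ((b * c * b) * b)) := by rw [hbcb]
        _ = b * (d * (b * (c * (b * b)))) := by simp only [mul_assoc]
        _ = b * (d * (b * (c * 1))) := by rw [hbb]
        _ = (b * d * b) * c := by simp only [mul_assoc, mul_one]
    rw [← key, conj_pow', conj_pow', hdb, mul_one, mul_inv_cancel, mul_one, mul_inv_cancel]
  · show ((b * d * b) * b * c * b) ^ 2 = 1
    have key : b * (d * c) * b⁻¹ = (b * d * b) * b * c * b := by
      rw [binv]
      calc b * (d * c) * b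
          = b * (d * (1 * (c * b))) := by simp only [mul_assoc, one_mul]
        _ = b * (d * ((b * b) * (c * b))) := by rw [hbb]
        _ = (b * d * b) * b * c * b := by simp only [mul_assoc]
    rw [← key, conj_pow', hdc, mul_one, mul_inv_cancel]
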